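/- arXiv:math/9812032 — 3 statements merged into one kernel-verified Lean document; each statement's English description precedes it below -/
import Mathlib

section
/- For all real x ≠ 0 and all real y, P(1/x^2, y·x^3 + x^2) = y^4 + 2y^2 + (3y^3 + 3y)·x + (3y^2 + 1)·x^2 + y·x^3. -/
noncomputable def P (x y : ℝ) : ℝ := y^4*x^6 - 4*y^3*x^5 + (3*y^3+6*y^2)*x^4 + (-7*y^2-4*y)*x^3 + (3*y^2+5*y+1)*x^2 + (-3*y-1)*x + y
theorem stmt5 : ∀ x : ℝ, x ≠ 0 → ∀ y : ℝ,
    P (1/x^2) (y*x^3 + x^2) = y^4 + 2*y^2 + (3*y^3+3*y)*x + (3*y^2+1)*x^2 + y*x^3 := by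
  intro x hx y
  unfold P
  field_simp
  ring
end

section
/- For every real s, the function x ↦ P(x, 1/x + s·x^{-3/2}) tends to s^4 + 2s^2 as x → +∞. -/
open Filter
/-!
As a polynomial in `x` and `u = x*y`,
`P = x²(u-1)⁴ + x(u-1)²(3u-1) + 3u(u-1) + y`.
Put `t = x^(-1/2)`, so that `x*t² = 1` and `y = t² + s*t³`. Then `u - 1 = s*t`, the two
leading terms become `s⁴` and `s²(2 + 3*s*t)`, and `P` is a polynomial in `t` whose value
at `t = 0` is `s⁴ + 2s²`; it remains to let `t → 0`.
-/

theorem P_eq (x y : ℝ) :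
    P x y = x^2*(x*y-1)^4 + x*(x*y-1)^2*(3*(x*y)-1) + 3*(x*y)*(x*y-1) + y := by
  unfold P
  ring

theorem P_eq_of_mul_sq_eq_one {x t : ℝ} (s : ℝ) (h : x * t^2 = 1) :
    P x (t^2 + s*t^3) =
      s^4 + 2*s^2 + 3*s^3*t + 3*s*t*(1+s*t) + t^2*(1+s*t) := by
  have hxy : x * (t^2 + s*t^3) = 1 + s*t := by linear_combination (1 + s*t) * h
  rw [P_eq, hxy]
  linear_combination (s^4*(x*t^2 + 1) + s^2*(2 + 3*s*t)) * h

theorem mul_rpow_neg_half_sq {x : ℝ} (hx : 0 < x) : x * (x ^ (-(1:ℝ)/2))^2 = 1 := by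
  rw [← Real.rpow_natCast, ← Real.rpow_mul hx.le]
  norm_num [Real.rpow_neg_one, hx.ne']

theorem rpow_neg_three_halves {x : ℝ} (hx : 0 < x) :
    x ^ (-(3:ℝ)/2) = (x ^ (-(1:ℝ)/2))^3 := by
  rw [← Real.rpow_natCast, ← Real.rpow_mul hx.le]
  norm_num

theorem tendsto_rpow_neg_half_atTop :
    Tendsto (fun x : ℝ => x ^ (-(1:ℝ)/2)) atTop (nhds 0) := by
  simpa [neg_div] using tendsto_rpow_neg_atTop (y := (1:ℝ)/2) (by norm_num)

theorem stmt7 : ∀ s : ℝ,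
    Tendsto (fun x : ℝ => P x (1/x + s*x^(-(3:ℝ)/2))) atTop (nhds (s^4 + 2*s^2)) := by
  intro s
  let q : ℝ → ℝ := fun t => s^4 + 2*s^2 + 3*s^3*t + 3*s*t*(1+s*t) + t^2*(1+s*t)
  have hq : Tendsto q (nhds 0) (nhds (s^4 + 2*s^2)) := by
    simpa [q] using (show Continuous q by fun_prop).tendsto 0
  refine (hq.comp tendsto_rpow_neg_half_atTop).congr' ?_
  filter_upwards [eventually_gt_atTop 0] with x hx
  have hxt := mul_rpow_neg_half_sq hx
  have hy : 1/x = (x ^ (-(1:ℝ)/2))^2 := by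
    rw [one_div, inv_eq_of_mul_eq_one_right hxt]
  rw [Function.comp_apply, hy, rpow_neg_three_halves hx, P_eq_of_mul_sq_eq_one s hxt]
end

section
/- For all real x ≠ 0, a, y, P(1/x^2, y·x^4 + a·x^3 + x^2) = x^4·y^4 + (4x^3·a + 3x^4)·y^3 + (9x^3·a + 6a^2·x^2 + 3x^4 + 2x^2)·y^2 + (6x^3·a + x^4 + 4a·x + 4a^3·x + 3x^2 + 9a^2·x^2)·y + a^4 + 3a·x + 3a^2·x^2 + x^2 + x^3·a + 3a^3·x + 2a^2. -/
theorem stmt15 : ∀ x : ℝ, x ≠ 0 → ∀ a y : ℝ,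
    P (1/x^2) (y*x^4 + a*x^3 + x^2) =
      x^4*y^4 + (4*x^3*a + 3*x^4)*y^3 + (9*x^3*a + 6*a^2*x^2 + 3*x^4 + 2*x^2)*y^2
      + (6*x^3*a + x^4 + 4*a*x + 4*a^3*x + 3*x^2 + 9*a^2*x^2)*y
      + a^4 + 3*a*x + 3*a^2*x^2 + x^2 + x^3*a + 3*a^3*x + 2*a^2 := by
  intro x hx a y
  simp only [P]
  field_simp
  ring
end
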